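/- arXiv:2109.00757 — 2 statements merged into one kernel-verified Lean document; each statement's English description precedes it below -/
import Mathlib

section
/- Let x_min < x_max, set ϑ = x_max − x_min and Z = (e^ϑ − 1)/ϑ. Then the maximum over x ∈ ℝ of Δ(x) = L(x) − e^x, where L is the secant line of exp through (x_min, e^{x_min}) and (x_max, e^{x_max}), equals Δ_max = e^{x_min}·(1 − Z + Z·log Z). -/
open Real

theorem separation_max_value (xmin xmax : ℝ) (h : xmin < xmax)
    (L Δ : ℝ → ℝ)
    (hL : ∀ x, L x = (xmax * exp xmin - xmin * exp xmax) / (xmax - xmin)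
        + ((exp xmax - exp xmin) / (xmax - xmin)) * x)
    (hΔ : ∀ x, Δ x = L x - exp x)
    (ϑ Z : ℝ) (hϑ : ϑ = xmax - xmin) (hZ : Z = (exp ϑ - 1) / ϑ) :
    IsGreatest (Set.range Δ) (exp xmin * (1 - Z + Z * Real.log Z)) := by
  have hd : 0 < xmax - xmin := by linarith
  set s : ℝ := (exp xmax - exp xmin) / (xmax - xmin) with hs_def
  have hexp : exp xmin < exp xmax := exp_lt_exp.mpr h
  have hs : 0 < s := div_pos (by linarith) hd
  have ha : (xmax * exp xmin - xmin * exp xmax) / (xmax - xmin)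
      = exp xmin - s * xmin := by
    rw [hs_def]
    field_simp
    ring
  have hsZ : s = exp xmin * Z := by
    rw [hZ, hϑ, exp_sub, hs_def]
    field_simp
  have hZpos : 0 < Z := by
    have h2 := hs
    rw [hsZ] at h2
    nlinarith [exp_pos xmin]
  have hlogZ : Real.log Z = Real.log s - xmin := by
    rw [hsZ, Real.log_mul (exp_pos xmin).ne' hZpos.ne', Real.log_exp]; ring
  have hval : Δ (Real.log s) = exp xmin * (1 - Z + Z * Real.log Z) := by
    rw [hΔ, hL, ha, Real.exp_log hs, hlogZ, hsZ]; ring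
  constructor
  · exact ⟨Real.log s, hval⟩
  · rintro y ⟨x, rfl⟩
    rw [← hval, hΔ, hΔ, hL, hL, Real.exp_log hs]
    have h1 : (x - Real.log s) + 1 ≤ exp (x - Real.log s) := add_one_le_exp _
    have h2 : exp (x - Real.log s) = exp x / s := by
      rw [exp_sub, Real.exp_log hs]
    rw [h2] at h1
    have h3 := mul_le_mul_of_nonneg_left h1 hs.le
    rw [mul_div_cancel₀ _ hs.ne'] at h3
    nlinarith
end

section
/- For ϑ > 0, with Z = (e^ϑ − 1)/ϑ, the inequality 1 − Z + Z·log Z ≤ ϑ²·e^ϑ/8 holds. -/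
/-! With `Z` the slope of `exp` on `[0, ϑ]`, the point `x = log Z ∈ [0, ϑ]` satisfies
`exp x = Z`, so `1 - Z + Z log Z = 1 + Z x - exp x` is the gap between `exp` and its chord at `x`.
Since `exp'' ≤ exp ϑ` on `[0, ϑ]`, the convexity of `exp ϑ · t² / 2 - exp` bounds that gap by
`exp ϑ · x (ϑ - x) / 2 ≤ ϑ² exp ϑ / 8`. -/

open Real

section

open Set

theorem ConvexOn.le_add_slope_mul_sub {𝕜 : Type*} [Field 𝕜] [LinearOrder 𝕜]
    [IsStrictOrderedRing 𝕜] {s : Set 𝕜} {g : 𝕜 → 𝕜} {a b x : 𝕜} (hg : ConvexOn 𝕜 s g)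
    (ha : a ∈ s) (hb : b ∈ s) (hax : a ≤ x) (hxb : x ≤ b) : g x ≤ g a + slope g a b * (x - a) := by
  rcases hax.eq_or_lt with rfl | hax
  · simp
  have hx : x ∈ s := hg.1.ordConnected.out ha hb ⟨hax.le, hxb⟩
  have hslope : slope g a x ≤ slope g a b :=
    hg.slope_mono ha ⟨hx, hax.ne'⟩ ⟨hb, (hax.trans_le hxb).ne'⟩ hxb
  calc g x = g a + slope g a x * (x - a) := by
        rw [slope_def_field, div_mul_cancel₀ _ (sub_ne_zero.mpr hax.ne')]; ring
    _ ≤ g a + slope g a b * (x - a) := by gcongr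

theorem slope_sq {𝕜 : Type*} [Field 𝕜] {a b : 𝕜} (hab : a ≠ b) :
    slope (fun t : 𝕜 => t ^ 2) a b = a + b := by
  rw [slope_def_field, div_eq_iff (sub_ne_zero.mpr hab.symm)]; ring

theorem add_slope_mul_sub_sub_le_of_deriv2_le {f f' f'' : ℝ → ℝ} {a b x M : ℝ}
    (hf : ContinuousOn f (Icc a b)) (hf' : ∀ t ∈ Ioo a b, HasDerivAt f (f' t) t)
    (hf'' : ∀ t ∈ Ioo a b, HasDerivAt f' (f'' t) t) (hM : ∀ t ∈ Ioo a b, f'' t ≤ M)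
    (hx : x ∈ Icc a b) :
    f a + slope f a b * (x - a) - f x ≤ M * (x - a) * (b - x) / 2 := by
  rcases (hx.1.trans hx.2).eq_or_lt with rfl | hab
  · obtain rfl : x = a := le_antisymm hx.2 hx.1
    simp
  -- `M t² / 2 - f` is convex, and its chord gap at `x` is `M (x - a)(b - x) / 2` minus that of `f`
  set g : ℝ → ℝ := fun t => M / 2 * t ^ 2 - f t
  have hg : ConvexOn ℝ (Icc a b) g := by
    refine convexOn_of_hasDerivWithinAt2_nonneg (convex_Icc a b) (f' := fun t => M * t - f' t)
      (f'' := fun t => M - f'' t) (by fun_prop) (fun t ht => ?_) (fun t ht => ?_) (fun t ht => ?_)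
    all_goals rw [interior_Icc] at ht
    · exact (((hasDerivAt_pow 2 t).const_mul (M / 2)).sub (hf' t ht)).hasDerivWithinAt.congr_deriv
        (by ring)
    · exact (((hasDerivAt_id t).const_mul M).sub (hf'' t ht)).hasDerivWithinAt.congr_deriv
        (by simp)
    · exact sub_nonneg.mpr (hM t ht)
  have hchord :=
    hg.le_add_slope_mul_sub (left_mem_Icc.mpr hab.le) (right_mem_Icc.mpr hab.le) hx.1 hx.2
  have hslope : slope g a b = M / 2 * (a + b) - slope f a b := by
    simp only [g, slope_def_field]
    rw [← slope_sq (𝕜 := ℝ) hab.ne, slope_def_field]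
    field_simp [sub_ne_zero.mpr hab.ne']; ring
  simp only [hslope, g] at hchord
  linear_combination hchord

theorem add_slope_mul_sub_sub_le_sq_div_eight_of_deriv2_le {f f' f'' : ℝ → ℝ} {a b x M : ℝ}
    (hf : ContinuousOn f (Icc a b)) (hf' : ∀ t ∈ Ioo a b, HasDerivAt f (f' t) t)
    (hf'' : ∀ t ∈ Ioo a b, HasDerivAt f' (f'' t) t) (hM : ∀ t ∈ Ioo a b, f'' t ≤ M)
    (hM₀ : 0 ≤ M) (hx : x ∈ Icc a b) :
    f a + slope f a b * (x - a) - f x ≤ M * (b - a) ^ 2 / 8 := by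
  have hamgm : (x - a) * (b - x) ≤ (b - a) ^ 2 / 4 := by nlinarith [sq_nonneg (a + b - 2 * x)]
  calc f a + slope f a b * (x - a) - f x ≤ M * ((x - a) * (b - x)) / 2 := by
        rw [← mul_assoc]; exact add_slope_mul_sub_sub_le_of_deriv2_le hf hf' hf'' hM hx
    _ ≤ M * ((b - a) ^ 2 / 4) / 2 := by gcongr
    _ = M * (b - a) ^ 2 / 8 := by ring

end

theorem sep_uniform_quadratic_bound (ϑ : ℝ) (hϑ : 0 < ϑ) (Z : ℝ)
    (hZ : Z = (exp ϑ - 1) / ϑ) :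
    1 - Z + Z * Real.log Z ≤ ϑ ^ 2 * exp ϑ / 8 := by
  have hslope : Z = slope exp 0 ϑ := by rw [hZ, slope_def_field]; simp
  have hZ₁ : 1 ≤ Z := by
    simpa [hslope] using
      convexOn_exp.le_slope_of_hasDerivAt (Set.mem_univ 0) (Set.mem_univ ϑ) hϑ (hasDerivAt_exp 0)
  have hZϑ : Z ≤ exp ϑ := hslope ▸
    convexOn_exp.slope_le_of_hasDerivAt (Set.mem_univ 0) (Set.mem_univ ϑ) hϑ (hasDerivAt_exp ϑ)
  have hlog : log Z ∈ Set.Icc 0 ϑ :=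
    ⟨log_nonneg hZ₁, (log_le_iff_le_exp (by linarith)).mpr hZϑ⟩
  have hgap := add_slope_mul_sub_sub_le_sq_div_eight_of_deriv2_le continuousOn_exp
    (fun t _ => hasDerivAt_exp t) (fun t _ => hasDerivAt_exp t)
    (fun t ht => exp_le_exp.mpr ht.2.le) (exp_pos ϑ).le hlog
  rw [← hslope, exp_log (by linarith), exp_zero, sub_zero, sub_zero] at hgap
  linarith
end
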